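/- With the notation of the context, for every particle array v ∈ Z^{T·M} and every index path k ∈ {1,…,M}^T one has G_θ((s_{1,k}(v))^{(𝟏)}) · Φ_{θ,ϑ}(s_{1,k}(v)) · b_{θ,ϑ}(k | s_{1,k}(v)) = G_θ(v^{(𝟏)}) · Φ_{θ,ϑ}(v) · b_{θ,ϑ}(k | v) · ∏_{t=1}^T [γ_{t,θ}(v_t^{(k_t)})/γ_{t,θ,ϑ}(v_t^{(k_t)})] · [γ_{t,θ,ϑ}(v_t^{(1)})/γ_{t,θ}(v_t^{(1)})]. -/

import Mathlib

/-!
The swap `s_{1,k}` exchanges the roles of the reference path `𝟏` and the path `k`: the target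
`G_θ` is now evaluated at `v^{(k)}`, the numerator of `b(k | ·)` at `v^{(𝟏)}`, while the
normalising sums of `b` are invariant under the permutation of each row. The proposal density
only loses the factor `q(v^{(k)})` and gains `q(v^{(𝟏)})`, since each row's full product of `q`
is permutation invariant. Collecting the ratios gives the identity.
-/

open MeasureTheory Finset

namespace MHAARRB5

variable {Z : Type*}

/-- The path `v^{(k)}` extracted from the particle array `v`. -/
def pathOf (n m : ℕ) (v : Fin (n + 1) → Fin (m + 1) → Z)
    (k : Fin (n + 1) → Fin (m + 1)) : Fin (n + 1) → Z := fun t => v t (k t)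

/-- The constant index path `𝟏`. -/
def onePath (n m : ℕ) : Fin (n + 1) → Fin (m + 1) := fun _ => 0

/-- The swap operator `s_{1,k}`. -/
def swapArr (n m : ℕ) (k : Fin (n + 1) → Fin (m + 1))
    (v : Fin (n + 1) → Fin (m + 1) → Z) : Fin (n + 1) → Fin (m + 1) → Z :=
  fun t i => v t (Equiv.swap 0 (k t) i)

/-- `G_θ(z) = ∏_t γ_{t,θ}(z_t)`. -/
noncomputable def G (n : ℕ) (γ : Fin (n + 1) → Z → ℝ) (z : Fin (n + 1) → Z) : ℝ :=
  ∏ t, γ t (z t)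

/-- The proposal density `Φ_{θ,ϑ}(v) = ∏_t ∏_{i≥2} q_{t,θ,ϑ}(v_t^{(i)})`. -/
noncomputable def Phi (n m : ℕ) (qp : Fin (n + 1) → Z → ℝ)
    (v : Fin (n + 1) → Fin (m + 1) → Z) : ℝ :=
  ∏ t, ∏ i ∈ univ.erase (0 : Fin (m + 1)), qp t (v t i)

/-- The selection probabilities `b_{θ,ϑ}(k|v)`. -/
noncomputable def bSel (n m : ℕ) (γ qp : Fin (n + 1) → Z → ℝ)
    (k : Fin (n + 1) → Fin (m + 1)) (v : Fin (n + 1) → Fin (m + 1) → Z) : ℝ :=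
  ∏ t, (γ t (v t (k t)) / qp t (v t (k t))) / (∑ j, γ t (v t j) / qp t (v t j))

theorem _root_.Finset.prod_erase_comp_swap_mul {ι M : Type*} [Fintype ι] [DecidableEq ι]
    [CommMonoid M] (f : ι → M) (a b : ι) :
    (∏ i ∈ univ.erase a, f (Equiv.swap a b i)) * f b = (∏ i ∈ univ.erase a, f i) * f a := by
  calc (∏ i ∈ univ.erase a, f (Equiv.swap a b i)) * f b
      = (∏ i ∈ univ.erase a, f (Equiv.swap a b i)) * f (Equiv.swap a b a) := by
        rw [Equiv.swap_apply_left]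
    _ = ∏ i, f i := by
        rw [prod_erase_mul _ _ (mem_univ a), Equiv.prod_comp (Equiv.swap a b) f]
    _ = (∏ i ∈ univ.erase a, f i) * f a := (prod_erase_mul _ _ (mem_univ a)).symm

theorem G_pos (n : ℕ) {γ : Fin (n + 1) → Z → ℝ} (hγ : ∀ t z, 0 < γ t z)
    (z : Fin (n + 1) → Z) : 0 < G n γ z :=
  prod_pos fun t _ => hγ t (z t)

section Swap

variable (n m : ℕ) (k : Fin (n + 1) → Fin (m + 1)) (v : Fin (n + 1) → Fin (m + 1) → Z)

theorem pathOf_swapArr_onePath :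
    pathOf n m (swapArr n m k v) (onePath n m) = pathOf n m v k :=
  funext fun t => congrArg (v t) (Equiv.swap_apply_left 0 (k t))

theorem Phi_swapArr_mul (q : Fin (n + 1) → Z → ℝ) :
    Phi n m q (swapArr n m k v) * G n q (pathOf n m v k)
      = Phi n m q v * G n q (pathOf n m v (onePath n m)) := by
  simp only [Phi, G, pathOf, onePath, swapArr, ← prod_mul_distrib]
  exact prod_congr rfl fun t _ => prod_erase_comp_swap_mul (fun i => q t (v t i)) 0 (k t)

theorem bSel_swapArr (γ q : Fin (n + 1) → Z → ℝ) :
    bSel n m γ q k (swapArr n m k v) = bSel n m γ q (onePath n m) v := by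
  refine prod_congr rfl fun t _ => ?_
  simp only [swapArr, onePath, Equiv.swap_apply_right,
    Equiv.sum_comp (Equiv.swap 0 (k t)) fun j => γ t (v t j) / q t (v t j)]

theorem bSel_eq_div (γ q : Fin (n + 1) → Z → ℝ) :
    bSel n m γ q k v = G n γ (pathOf n m v k) / G n q (pathOf n m v k)
      / ∏ t, ∑ j, γ t (v t j) / q t (v t j) := by
  simp only [bSel, G, pathOf, prod_div_distrib]

end Swap

theorem swap_density_identity_general
    (n m : ℕ)
    (γθ γθϑ qp : Fin (n + 1) → Z → ℝ)
    (hγθ : ∀ t z, 0 < γθ t z) (hγθϑ : ∀ t z, 0 < γθϑ t z) (hqp : ∀ t z, 0 < qp t z)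
    (v : Fin (n + 1) → Fin (m + 1) → Z) (k : Fin (n + 1) → Fin (m + 1)) :
    G n γθ (pathOf n m (swapArr n m k v) (onePath n m)) *
        Phi n m qp (swapArr n m k v) * bSel n m γθϑ qp k (swapArr n m k v)
      = G n γθ (pathOf n m v (onePath n m)) * Phi n m qp v * bSel n m γθϑ qp k v *
          ∏ t, (γθ t (v t (k t)) / γθϑ t (v t (k t))) *
            (γθϑ t (v t 0) / γθ t (v t 0)) := by
  have hratio : ∏ t, (γθ t (v t (k t)) / γθϑ t (v t (k t))) * (γθϑ t (v t 0) / γθ t (v t 0))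
      = G n γθ (pathOf n m v k) / G n γθϑ (pathOf n m v k)
        * (G n γθϑ (pathOf n m v (onePath n m)) / G n γθ (pathOf n m v (onePath n m))) := by
    simp only [G, pathOf, onePath, prod_mul_distrib, prod_div_distrib]
  have hPhi := Phi_swapArr_mul n m k v qp
  rw [pathOf_swapArr_onePath, bSel_swapArr, bSel_eq_div, bSel_eq_div, hratio]
  set N := ∏ t, ∑ j, γθϑ t (v t j) / qp t (v t j)
  have := (G_pos n hγθ (pathOf n m v k)).ne'
  have := (G_pos n hγθ (pathOf n m v (onePath n m))).ne'
  have := (G_pos n hγθϑ (pathOf n m v k)).ne'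
  have := (G_pos n hqp (pathOf n m v k)).ne'
  have := (G_pos n hqp (pathOf n m v (onePath n m))).ne'
  field_simp
  linear_combination G n γθϑ (pathOf n m v (onePath n m)) / N * hPhi

/-- For every particle array `v` and index path `k`,
`G_θ((s_{1,k}(v))^{(𝟏)}) Φ_{θ,ϑ}(s_{1,k}(v)) b_{θ,ϑ}(k|s_{1,k}(v))
  = G_θ(v^{(𝟏)}) Φ_{θ,ϑ}(v) b_{θ,ϑ}(k|v) ·
    ∏_t [γ_{t,θ}(v_t^{(k_t)})/γ_{t,θ,ϑ}(v_t^{(k_t)})]·[γ_{t,θ,ϑ}(v_t^{(1)})/γ_{t,θ}(v_t^{(1)})]`. -/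
theorem swap_density_identity
    [MeasurableSpace Z] (n m : ℕ)
    (γθ γθϑ qp : Fin (n + 1) → Z → ℝ)
    (hγθm : ∀ t, Measurable (γθ t)) (hγθϑm : ∀ t, Measurable (γθϑ t))
    (hqpm : ∀ t, Measurable (qp t))
    (hγθ : ∀ t z, 0 < γθ t z) (hγθϑ : ∀ t z, 0 < γθϑ t z) (hqp : ∀ t z, 0 < qp t z)
    (v : Fin (n + 1) → Fin (m + 1) → Z) (k : Fin (n + 1) → Fin (m + 1)) :
    G n γθ (pathOf n m (swapArr n m k v) (onePath n m)) *
        Phi n m qp (swapArr n m k v) * bSel n m γθϑ qp k (swapArr n m k v)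
      = G n γθ (pathOf n m v (onePath n m)) * Phi n m qp v * bSel n m γθϑ qp k v *
          ∏ t, (γθ t (v t (k t)) / γθϑ t (v t (k t))) *
            (γθϑ t (v t 0) / γθ t (v t 0)) :=
  swap_density_identity_general n m γθ γθϑ qp hγθ hγθϑ hqp v k

end MHAARRB5
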